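/- (Generalised Uniqueness Theorem) Let G be an ample Hausdorff groupoid, R a unital commutative ring, (Σ, i, q) a discrete twist over G, and suppose X_Σ = {u ∈ Σ⁽⁰⁾ : Σᵤᵘ ⊆ Iso(Σ)°} is dense in Σ⁽⁰⁾. Let Q be a ring and π : A_R(G; Σ) → Q a ring homomorphism. Then π is injective if and only if π(ι(f)) ≠ 0 for every nonzero f ∈ A_R(Iso(G)°; Iso(Σ)°), where ι is the natural inclusion of A_R(Iso(G)°; Iso(Σ)°) into A_R(G; Σ). -/

import Mathlib

open Set Function TopologicalSpace Classical
noncomputable section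

universe u v w

/-- An étale topological groupoid, encoded with total operations:
`mul a b` is only meaningful when `src a = rng b`. -/
structure EtaleGroupoid (G : Type u) [TopologicalSpace G] where
  mul : G → G → G
  inv : G → G
  src : G → G
  rng : G → G
  rng_mul_self : ∀ g, mul (rng g) g = g
  mul_src_self : ∀ g, mul g (src g) = g
  src_inv : ∀ g, src (inv g) = rng g
  rng_inv : ∀ g, rng (inv g) = src g
  inv_inv : ∀ g, inv (inv g) = g
  inv_mul_self : ∀ g, mul (inv g) g = src g
  mul_inv_self : ∀ g, mul g (inv g) = rng g
  mul_assoc' : ∀ a b c, src a = rng b → src b = rng c →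
    mul (mul a b) c = mul a (mul b c)
  src_mul : ∀ a b, src a = rng b → src (mul a b) = src b
  rng_mul : ∀ a b, src a = rng b → rng (mul a b) = rng a
  continuous_inv : Continuous inv
  continuousOn_mul :
    ContinuousOn (fun p : G × G => mul p.1 p.2) {p : G × G | src p.1 = rng p.2}
  isLocalHomeomorph_src : IsLocalHomeomorph src

namespace EtaleGroupoid

variable {G : Type u} [TopologicalSpace G] (𝒢 : EtaleGroupoid G)

/-- The unit space `G⁽⁰⁾`. -/
def unitSpace : Set G := Set.range 𝒢.src

/-- The isotropy bundle `Iso(G) = {γ : r γ = s γ}`. -/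
def iso : Set G := {g | 𝒢.rng g = 𝒢.src g}

/-- The isotropy group `Gᵤᵘ` at a unit `u`. -/
def isoAt (u : G) : Set G := {g | 𝒢.rng g = u ∧ 𝒢.src g = u}

/-- `U` is a bisection: `src` and `rng` are injective on `U`. -/
def IsBisection (U : Set G) : Prop := Set.InjOn 𝒢.src U ∧ Set.InjOn 𝒢.rng U

/-- `U` is a compact open bisection. -/
def IsCOB (U : Set G) : Prop := IsCompact U ∧ IsOpen U ∧ 𝒢.IsBisection U

/-- Pointwise inverse of a set. -/
def setInv (U : Set G) : Set G := 𝒢.inv '' U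

/-- Pointwise product of two sets (only composable products). -/
def setMul (U V : Set G) : Set G :=
  {g | ∃ a ∈ U, ∃ b ∈ V, 𝒢.src a = 𝒢.rng b ∧ g = 𝒢.mul a b}

/-- `H` is a subgroupoid of `G`. -/
def IsSubgroupoid (H : Set G) : Prop :=
  (∀ a ∈ H, 𝒢.inv a ∈ H) ∧
  (∀ a ∈ H, ∀ b ∈ H, 𝒢.src a = 𝒢.rng b → 𝒢.mul a b ∈ H) ∧
  (∀ a ∈ H, 𝒢.src a ∈ H)

/-- The groupoid is effective: the interior of the isotropy is the unit space. -/
def Effective : Prop := interior 𝒢.iso = 𝒢.unitSpace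

/-- A continuous (i.e. locally constant) `Rˣ`-valued 2-cocycle on `G`. -/
def IsCocycle {R : Type w} [CommRing R] (c : G → G → Rˣ) : Prop :=
  IsLocallyConstant (fun p : {p : G × G // 𝒢.src p.1 = 𝒢.rng p.2} => c p.1.1 p.1.2) ∧
  (∀ a b d, 𝒢.src a = 𝒢.rng b → 𝒢.src b = 𝒢.rng d →
    c a b * c (𝒢.mul a b) d = c b d * c a (𝒢.mul b d)) ∧
  (∀ g, c (𝒢.rng g) g = 1 ∧ c g (𝒢.src g) = 1)

/-- Membership in the (cocycle-twisted) Steinberg algebra `A_R(G)`: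
locally constant, compactly supported functions `G → R`. -/
def MemSt {R : Type w} [CommRing R] (f : G → R) : Prop :=
  IsLocallyConstant f ∧ ∃ K : Set G, IsCompact K ∧ Function.support f ⊆ K

/-- Convolution on `A_R(G;σ)` twisted by a 2-cocycle `c`. -/
noncomputable def convC {R : Type w} [CommRing R] (c : G → G → Rˣ) (f g : G → R) :
    G → R := fun γ =>
  ∑ᶠ p : G × G,
    if 𝒢.src p.1 = 𝒢.rng p.2 ∧ 𝒢.mul p.1 p.2 = γ then
      (c p.1 p.2 : R) * f p.1 * g p.2 else 0

/-- A continuous `Γ`-grading on `G` (for a discrete group `Γ`). -/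
def IsGrading {Γ : Type*} [Group Γ] (c : G → Γ) : Prop :=
  IsLocallyConstant c ∧ ∀ a b, 𝒢.src a = 𝒢.rng b → c (𝒢.mul a b) = c a * c b

end EtaleGroupoid

/-- An ample groupoid: étale with a basis of compact open bisections. -/
structure AmpleGroupoid (G : Type u) [TopologicalSpace G] extends EtaleGroupoid G where
  ample : TopologicalSpace.IsTopologicalBasis {U : Set G | toEtaleGroupoid.IsCOB U}

/-- A discrete twist `G⁽⁰⁾ × Rˣ → Σ → G` over an ample groupoid `G`. -/
structure DiscreteTwist (R : Type w) [CommRing R] {G : Type u} {S : Type v}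
    [TopologicalSpace G] [TopologicalSpace S]
    (𝒢 : AmpleGroupoid G) (𝒮 : EtaleGroupoid S) where
  i : G → Rˣ → S
  q : S → G
  continuousOn_i : ∀ t : Rˣ, ContinuousOn (fun x => i x t) 𝒢.unitSpace
  continuous_q : Continuous q
  i_injOn : Set.InjOn (fun p : G × Rˣ => i p.1 p.2) (𝒢.unitSpace ×ˢ (Set.univ : Set Rˣ))
  q_surj : Function.Surjective q
  exact' : ∀ x ∈ 𝒢.unitSpace, q ⁻¹' {x} = {σ | ∃ t : Rˣ, σ = i x t}
  i_mul : ∀ x ∈ 𝒢.unitSpace, ∀ s t : Rˣ, 𝒮.mul (i x s) (i x t) = i x (s * t)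
  unit_eq : 𝒮.unitSpace = (fun x => i x 1) '' 𝒢.unitSpace
  q_mul : ∀ a b, 𝒮.src a = 𝒮.rng b → q (𝒮.mul a b) = 𝒢.mul (q a) (q b)
  q_inv : ∀ a, q (𝒮.inv a) = 𝒢.inv (q a)
  q_src : ∀ a, q (𝒮.src a) = 𝒢.src (q a)
  q_rng : ∀ a, q (𝒮.rng a) = 𝒢.rng (q a)
  q_unit_bij : Set.BijOn q 𝒮.unitSpace 𝒢.unitSpace
  central : ∀ (σ : S) (t : Rˣ),
    𝒮.mul (i (𝒢.rng (q σ)) t) σ = 𝒮.mul σ (i (𝒢.src (q σ)) t)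
  loc_triv : ∀ α : G, ∃ B : Set G, IsOpen B ∧ α ∈ B ∧ 𝒢.IsBisection B ∧
    ∃ P : G → S, ContinuousOn P B ∧ (∀ β ∈ B, q (P β) = β) ∧
      (∀ t : Rˣ, ContinuousOn (fun β => 𝒮.mul (i (𝒢.rng β) t) (P β)) B) ∧
      (∀ σ : S, q σ ∈ B →
        ∃! p : G × Rˣ, p.1 ∈ B ∧ 𝒮.mul (i (𝒢.rng p.1) p.2) (P p.1) = σ) ∧
      (∀ t : Rˣ, ∀ V ⊆ B, IsOpen V →
        IsOpen ((fun β => 𝒮.mul (i (𝒢.rng β) t) (P β)) '' V))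

namespace DiscreteTwist

variable {R : Type w} [CommRing R] {G : Type u} {S : Type v}
  [TopologicalSpace G] [TopologicalSpace S]
  {𝒢 : AmpleGroupoid G} {𝒮 : EtaleGroupoid S} (T : DiscreteTwist R 𝒢 𝒮)

/-- The action of `Rˣ` on `Σ`: `t • σ = i(r σ, t) σ`. -/
def act (t : Rˣ) (σ : S) : S := 𝒮.mul (T.i (𝒢.rng (T.q σ)) t) σ

/-- The function `1̃_X` associated to a subset `X ⊆ Σ`. -/
noncomputable def tilde (X : Set S) : S → R := fun σ =>
  if h : ∃ t : Rˣ, σ ∈ T.act t '' X then (((Classical.choose h)⁻¹ : Rˣ) : R) else 0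

/-- Membership in the twisted Steinberg algebra `A_R(G;Σ)`: locally constant,
`Rˣ`-contravariant functions with compact image of the support in `G`. -/
def MemA (f : S → R) : Prop :=
  IsLocallyConstant f ∧
  (∀ (t : Rˣ) (σ : S), f (T.act t σ) = ((t⁻¹ : Rˣ) : R) * f σ) ∧
  IsCompact (T.q '' Function.support f)

/-- A (not necessarily continuous) section of `q`. -/
noncomputable def sec : G → S := Function.surjInv T.q_surj

/-- Convolution on `A_R(G;Σ)`, defined via the section `sec`. -/
noncomputable def conv (f g : S → R) : S → R := fun σ =>
  ∑ᶠ α : G,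
    if 𝒢.rng α = 𝒢.rng (T.q σ) then
      f (T.sec α) * g (𝒮.mul (𝒮.inv (T.sec α)) σ) else 0

end DiscreteTwist

end

/-!
If `π` kills a nonzero `h = f - g`, convolving with `1̃` of a compact open bisection moves a
nonzero value of `h` onto a unit, and local constancy together with the density of `X_Σ` moves
it to a unit `u ∈ X_Σ`. The arrows of the support outside `Iso(Σ)°` have compact image in `G`
that misses the isotropy at `q u`, so for a small compact open set `K ∋ q u` of units the
product `1̃_K * f₀ * 1̃_K`, which is `f₀` cut down to arrows with range and source in `K`, is
supported in `Iso(Σ)°`. It is nonzero at `u` and killed by `π`.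
-/

namespace EtaleGroupoid

variable {G : Type*} [TopologicalSpace G] (𝒢 : EtaleGroupoid G)

theorem src_src (g : G) : 𝒢.src (𝒢.src g) = 𝒢.src g := by
  conv_lhs => rw [← 𝒢.inv_mul_self g]
  rw [𝒢.src_mul _ _ (𝒢.src_inv g)]

theorem rng_src (g : G) : 𝒢.rng (𝒢.src g) = 𝒢.src g := by
  conv_lhs => rw [← 𝒢.inv_mul_self g]
  rw [𝒢.rng_mul _ _ (𝒢.src_inv g), 𝒢.rng_inv]

theorem src_mem_unitSpace (g : G) : 𝒢.src g ∈ 𝒢.unitSpace := ⟨g, rfl⟩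

theorem rng_mem_unitSpace (g : G) : 𝒢.rng g ∈ 𝒢.unitSpace := ⟨𝒢.inv g, 𝒢.src_inv g⟩

variable {𝒢} in
theorem src_of_mem_unitSpace {u : G} (hu : u ∈ 𝒢.unitSpace) : 𝒢.src u = u := by
  obtain ⟨g, rfl⟩ := hu
  exact 𝒢.src_src g

variable {𝒢} in
theorem rng_of_mem_unitSpace {u : G} (hu : u ∈ 𝒢.unitSpace) : 𝒢.rng u = u := by
  obtain ⟨g, rfl⟩ := hu
  exact 𝒢.rng_src g

variable {𝒢} in
theorem inv_of_mem_unitSpace {u : G} (hu : u ∈ 𝒢.unitSpace) : 𝒢.inv u = u := by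
  calc 𝒢.inv u = 𝒢.mul (𝒢.inv u) (𝒢.src (𝒢.inv u)) := (𝒢.mul_src_self _).symm
    _ = 𝒢.mul (𝒢.inv u) u := by rw [𝒢.src_inv, rng_of_mem_unitSpace hu]
    _ = u := by rw [𝒢.inv_mul_self, src_of_mem_unitSpace hu]

theorem eq_inv_of_mul_eq_rng {a b : G} (hc : 𝒢.src a = 𝒢.rng b) (h : 𝒢.mul a b = 𝒢.rng a) :
    b = 𝒢.inv a :=
  calc b = 𝒢.mul (𝒢.mul (𝒢.inv a) a) b := by rw [𝒢.inv_mul_self, hc, 𝒢.rng_mul_self]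
    _ = 𝒢.mul (𝒢.inv a) (𝒢.rng a) := by
      rw [𝒢.mul_assoc' _ _ _ (𝒢.src_inv a) hc, h]
    _ = 𝒢.inv a := by rw [← 𝒢.src_inv, 𝒢.mul_src_self]

theorem continuous_src : Continuous 𝒢.src := 𝒢.isLocalHomeomorph_src.continuous

theorem isOpenMap_src : IsOpenMap 𝒢.src := 𝒢.isLocalHomeomorph_src.isOpenMap

theorem image_inv (U : Set G) : 𝒢.inv '' U = 𝒢.inv ⁻¹' U :=
  congrFun (Involutive.image_eq_preimage_symm 𝒢.inv_inv) U

theorem isOpenMap_inv : IsOpenMap 𝒢.inv := fun U hU => by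
  rw [image_inv]
  exact hU.preimage 𝒢.continuous_inv

theorem rng_eq_src_comp_inv : 𝒢.rng = 𝒢.src ∘ 𝒢.inv := funext fun g => (𝒢.src_inv g).symm

theorem continuous_rng : Continuous 𝒢.rng := by
  rw [rng_eq_src_comp_inv]
  exact 𝒢.continuous_src.comp 𝒢.continuous_inv

theorem isOpenMap_rng : IsOpenMap 𝒢.rng := by
  rw [rng_eq_src_comp_inv]
  exact 𝒢.isOpenMap_src.comp 𝒢.isOpenMap_inv

theorem isOpen_unitSpace : IsOpen 𝒢.unitSpace := 𝒢.isOpenMap_src.isOpen_range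

variable {𝒢}

theorem injOn_rng_of_subset_unitSpace {K : Set G} (hK : K ⊆ 𝒢.unitSpace) : InjOn 𝒢.rng K :=
  fun a ha b hb h => by rwa [rng_of_mem_unitSpace (hK ha), rng_of_mem_unitSpace (hK hb)] at h

theorem eq_of_inv_mul_mem_unitSpace {α γ : G} (hr : 𝒢.rng α = 𝒢.rng γ)
    (h : 𝒢.mul (𝒢.inv α) γ ∈ 𝒢.unitSpace) : α = γ := by
  have hc : 𝒢.src (𝒢.inv α) = 𝒢.rng γ := by rw [𝒢.src_inv, hr]
  have hx : 𝒢.mul (𝒢.inv α) γ = 𝒢.src α := by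
    rw [← rng_of_mem_unitSpace h, 𝒢.rng_mul _ _ hc, 𝒢.rng_inv]
  calc α = 𝒢.mul α (𝒢.mul (𝒢.inv α) γ) := by rw [hx, 𝒢.mul_src_self]
    _ = γ := by
      rw [← 𝒢.mul_assoc' _ _ _ (𝒢.rng_inv α).symm hc, 𝒢.mul_inv_self, hr, 𝒢.rng_mul_self]

theorem isCompact_setMul [T2Space G] {C D : Set G} (hC : IsCompact C) (hD : IsCompact D) :
    IsCompact (𝒢.setMul C D) := by
  have heq : 𝒢.setMul C D =
      (fun p : G × G => 𝒢.mul p.1 p.2) '' ((C ×ˢ D) ∩ {p | 𝒢.src p.1 = 𝒢.rng p.2}) := by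
    ext g
    constructor
    · rintro ⟨a, ha, b, hb, hc, rfl⟩; exact ⟨(a, b), ⟨⟨ha, hb⟩, hc⟩, rfl⟩
    · rintro ⟨⟨a, b⟩, ⟨⟨ha, hb⟩, hc⟩, rfl⟩; exact ⟨a, ha, b, hb, hc, rfl⟩
  have hclosed : IsClosed {p : G × G | 𝒢.src p.1 = 𝒢.rng p.2} :=
    isClosed_eq (𝒢.continuous_src.comp continuous_fst) (𝒢.continuous_rng.comp continuous_snd)
  rw [heq]
  exact ((hC.prod hD).inter_right hclosed).image_of_continuousOn
    (𝒢.continuousOn_mul.mono inter_subset_right)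

theorem continuousOn_invFunOn_rng [Nonempty G] {B : Set G} (hBo : IsOpen B)
    (hBinj : InjOn 𝒢.rng B) : ContinuousOn (invFunOn 𝒢.rng B) (𝒢.rng '' B) := by
  have hmem : ∀ y ∈ 𝒢.rng '' B, invFunOn 𝒢.rng B y ∈ B ∧ 𝒢.rng (invFunOn 𝒢.rng B y) = y :=
    fun y hy => ⟨invFunOn_mem hy, invFunOn_eq hy⟩
  rw [continuousOn_iff]
  intro y hy t hto hρy
  refine ⟨𝒢.rng '' (t ∩ B), 𝒢.isOpenMap_rng _ (hto.inter hBo),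
    ⟨_, ⟨hρy, (hmem y hy).1⟩, (hmem y hy).2⟩, ?_⟩
  rintro _ ⟨⟨β, hβ, rfl⟩, -⟩
  have h := hmem _ ⟨β, hβ.2, rfl⟩
  rw [mem_preimage, hBinj h.1 hβ.2 h.2]
  exact hβ.1

end EtaleGroupoid

namespace DiscreteTwist

open EtaleGroupoid

variable {R : Type*} [CommRing R] {G S : Type*} [TopologicalSpace G] [TopologicalSpace S]
  {𝒢 : AmpleGroupoid G} {𝒮 : EtaleGroupoid S} (T : DiscreteTwist R 𝒢 𝒮)

theorem q_i {x : G} (hx : x ∈ 𝒢.unitSpace) (t : Rˣ) : T.q (T.i x t) = x := by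
  have h : T.i x t ∈ T.q ⁻¹' {x} := by
    rw [T.exact' x hx]
    exact ⟨t, rfl⟩
  simpa using h

theorem i_one_mem_unitSpace {x : G} (hx : x ∈ 𝒢.unitSpace) : T.i x 1 ∈ 𝒮.unitSpace := by
  rw [T.unit_eq]
  exact ⟨x, hx, rfl⟩

theorem eq_i_one_of_mem_unitSpace {σ : S} (hσ : σ ∈ 𝒮.unitSpace) : σ = T.i (T.q σ) 1 :=
  T.q_unit_bij.injOn hσ (T.i_one_mem_unitSpace (T.q_unit_bij.mapsTo hσ))
    (T.q_i (T.q_unit_bij.mapsTo hσ) 1).symm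

theorem rng_eq_i_one (σ : S) : 𝒮.rng σ = T.i (𝒢.rng (T.q σ)) 1 := by
  rw [T.eq_i_one_of_mem_unitSpace (rng_mem_unitSpace 𝒮 σ), T.q_rng]

theorem src_eq_i_one (σ : S) : 𝒮.src σ = T.i (𝒢.src (T.q σ)) 1 := by
  rw [T.eq_i_one_of_mem_unitSpace (src_mem_unitSpace 𝒮 σ), T.q_src]

theorem q_src_eq_q_rng {a b : S} (h : 𝒮.src a = 𝒮.rng b) :
    𝒢.src (T.q a) = 𝒢.rng (T.q b) := by
  rw [← T.q_src, ← T.q_rng, h]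

theorem src_i {x : G} (hx : x ∈ 𝒢.unitSpace) (t : Rˣ) : 𝒮.src (T.i x t) = T.i x 1 := by
  rw [T.src_eq_i_one, T.q_i hx, src_of_mem_unitSpace hx]

theorem rng_i {x : G} (hx : x ∈ 𝒢.unitSpace) (t : Rˣ) : 𝒮.rng (T.i x t) = T.i x 1 := by
  rw [T.rng_eq_i_one, T.q_i hx, rng_of_mem_unitSpace hx]

theorem src_i_rng_q (t : Rˣ) (σ : S) : 𝒮.src (T.i (𝒢.rng (T.q σ)) t) = 𝒮.rng σ := by
  rw [T.src_i (rng_mem_unitSpace _ _), T.rng_eq_i_one]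

theorem q_act (t : Rˣ) (σ : S) : T.q (T.act t σ) = T.q σ := by
  rw [act, T.q_mul _ _ (T.src_i_rng_q t σ), T.q_i (rng_mem_unitSpace _ _), 𝒢.rng_mul_self]

theorem rng_act (t : Rˣ) (σ : S) : 𝒮.rng (T.act t σ) = 𝒮.rng σ := by
  rw [act, 𝒮.rng_mul _ _ (T.src_i_rng_q t σ), T.rng_i (rng_mem_unitSpace _ _),
    ← T.rng_eq_i_one]

theorem src_act (t : Rˣ) (σ : S) : 𝒮.src (T.act t σ) = 𝒮.src σ :=
  𝒮.src_mul _ _ (T.src_i_rng_q t σ)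

theorem act_one (σ : S) : T.act 1 σ = σ := by
  rw [act, ← T.rng_eq_i_one, 𝒮.rng_mul_self]

theorem act_act (t s : Rˣ) (σ : S) : T.act t (T.act s σ) = T.act (t * s) σ := by
  have hx : 𝒢.rng (T.q σ) ∈ 𝒢.unitSpace := rng_mem_unitSpace _ _
  have hc : 𝒮.src (T.i (𝒢.rng (T.q σ)) t) = 𝒮.rng (T.i (𝒢.rng (T.q σ)) s) := by
    rw [T.src_i hx, T.rng_i hx]
  rw [act, T.q_act, act, act, ← 𝒮.mul_assoc' _ _ _ hc (T.src_i_rng_q s σ), T.i_mul _ hx t s]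

theorem act_inv_act (t : Rˣ) (σ : S) : T.act t⁻¹ (T.act t σ) = σ := by
  rw [act_act, inv_mul_cancel, act_one]

theorem eq_one_of_act_eq_self {s : Rˣ} {σ : S} (h : T.act s σ = σ) : s = 1 := by
  have hx : 𝒢.rng (T.q σ) ∈ 𝒢.unitSpace := rng_mem_unitSpace _ _
  have hL : 𝒮.mul (T.act s σ) (𝒮.inv σ) = T.i (𝒢.rng (T.q σ)) s := by
    rw [act, 𝒮.mul_assoc' _ _ _ (T.src_i_rng_q s σ) (𝒮.rng_inv σ).symm,
      𝒮.mul_inv_self, T.rng_eq_i_one, T.i_mul _ hx s 1, mul_one]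
  rw [h, 𝒮.mul_inv_self, T.rng_eq_i_one] at hL
  have hp : ((𝒢.rng (T.q σ), s) : G × Rˣ) = (𝒢.rng (T.q σ), 1) :=
    T.i_injOn ⟨hx, mem_univ _⟩ ⟨hx, mem_univ _⟩ hL.symm
  exact (Prod.ext_iff.mp hp).2

theorem act_eq_act_iff {s t : Rˣ} {σ : S} : T.act s σ = T.act t σ ↔ s = t := by
  refine ⟨fun h => ?_, fun h => h ▸ rfl⟩
  have h' := congrArg (T.act t⁻¹) h
  rw [act_inv_act, act_act] at h'
  exact (inv_mul_eq_one.mp (T.eq_one_of_act_eq_self h')).symm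

theorem exists_act_eq_of_q_eq {τ σ : S} (h : T.q τ = T.q σ) : ∃ t : Rˣ, τ = T.act t σ := by
  obtain ⟨B, -, hBm, -, P, -, hPq, -, huniq, -⟩ := T.loc_triv (T.q σ)
  have horbit : ∀ ρ : S, T.q ρ = T.q σ → ∃ t : Rˣ, ρ = T.act t (P (T.q σ)) := by
    intro ρ hρ
    obtain ⟨⟨β, t⟩, ⟨hβ, he⟩, -⟩ := huniq ρ (hρ ▸ hBm)
    have he' : T.act t (P β) = ρ := by rw [act, hPq β hβ]; exact he
    have hβq : β = T.q σ := by rw [← hρ, ← he', T.q_act, hPq β hβ]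
    exact ⟨t, by rw [← he', hβq]⟩
  obtain ⟨t₁, ht₁⟩ := horbit σ rfl
  obtain ⟨t₂, ht₂⟩ := horbit τ h
  refine ⟨t₂ * t₁⁻¹, ?_⟩
  calc τ = T.act (t₂ * t₁⁻¹) (T.act t₁ (P (T.q σ))) := by rw [ht₂, act_act, inv_mul_cancel_right]
    _ = T.act (t₂ * t₁⁻¹) σ := by rw [← ht₁]

theorem act_mul (t : Rˣ) {a b : S} (h : 𝒮.src a = 𝒮.rng b) :
    T.act t (𝒮.mul a b) = 𝒮.mul (T.act t a) b := by
  rw [act, act, T.q_mul a b h, 𝒢.rng_mul _ _ (T.q_src_eq_q_rng h)]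
  exact (𝒮.mul_assoc' _ a b (T.src_i_rng_q t a) h).symm

theorem mul_act (t : Rˣ) {a b : S} (h : 𝒮.src a = 𝒮.rng b) :
    𝒮.mul a (T.act t b) = T.act t (𝒮.mul a b) := by
  have hy : 𝒢.src (T.q a) ∈ 𝒢.unitSpace := src_mem_unitSpace _ _
  calc 𝒮.mul a (T.act t b)
      = 𝒮.mul a (𝒮.mul (T.i (𝒢.src (T.q a)) t) b) := by rw [act, T.q_src_eq_q_rng h]
    _ = 𝒮.mul (𝒮.mul a (T.i (𝒢.src (T.q a)) t)) b := by
        rw [𝒮.mul_assoc' _ _ _ (by rw [T.rng_i hy, T.src_eq_i_one])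
          (by rw [T.src_i hy, ← T.src_eq_i_one, h])]
    _ = T.act t (𝒮.mul a b) := by rw [← T.central a t, ← act, T.act_mul t h]

theorem inv_act (t : Rˣ) (σ : S) : 𝒮.inv (T.act t σ) = T.act t⁻¹ (𝒮.inv σ) := by
  have hsr : 𝒮.src σ = 𝒮.rng (𝒮.inv σ) := (𝒮.rng_inv σ).symm
  refine (eq_inv_of_mul_eq_rng 𝒮 (by rw [T.src_act, T.rng_act, 𝒮.rng_inv]) ?_).symm
  rw [T.mul_act _ (by rw [T.src_act, 𝒮.rng_inv]), ← T.act_mul t hsr, act_inv_act,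
    𝒮.mul_inv_self, T.rng_act]

theorem q_sec (α : G) : T.q (T.sec α) = α := surjInv_eq T.q_surj α

theorem isOpenMap_act (t : Rˣ) : IsOpenMap (T.act t) := by
  intro O hO
  refine isOpen_iff_forall_mem_open.mpr ?_
  rintro _ ⟨σ, hσO, rfl⟩
  obtain ⟨B, hBo, hBm, -, P, -, hPq, hgc, -, hopenIm⟩ := T.loc_triv (T.q σ)
  obtain ⟨s, hs⟩ := T.exists_act_eq_of_q_eq (hPq _ hBm).symm
  have hact : ∀ r : Rˣ, ∀ β ∈ B, 𝒮.mul (T.i (𝒢.rng β) r) (P β) = T.act r (P β) :=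
    fun r β hβ => by rw [act, hPq β hβ]
  have hmem : 𝒮.mul (T.i (𝒢.rng (T.q σ)) s) (P (T.q σ)) ∈ O := by
    rw [hact s _ hBm, ← hs]
    exact hσO
  obtain ⟨U, hUo, hUm, hUsub⟩ := mem_nhdsWithin.mp ((hgc s (T.q σ) hBm) (hO.mem_nhds hmem))
  refine ⟨(fun β => 𝒮.mul (T.i (𝒢.rng β) (t * s)) (P β)) '' (U ∩ B), ?_,
    hopenIm (t * s) (U ∩ B) inter_subset_right (hUo.inter hBo),
    ⟨T.q σ, ⟨hUm, hBm⟩, by dsimp only; rw [hact _ _ hBm, ← act_act, ← hs]⟩⟩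
  rintro _ ⟨β, hβ, rfl⟩
  exact ⟨_, hUsub hβ, by simp only [hact _ _ hβ.2, act_act]⟩

theorem act_mem_interior_iso (t : Rˣ) {σ : S} (h : σ ∈ interior 𝒮.iso) :
    T.act t σ ∈ interior 𝒮.iso := by
  obtain ⟨O, hOsub, hOo, hσ⟩ := mem_interior.mp h
  refine mem_interior.mpr ⟨T.act t '' O, ?_, T.isOpenMap_act t O hOo, σ, hσ, rfl⟩
  rintro _ ⟨a, ha, rfl⟩
  have ha' : 𝒮.rng a = 𝒮.src a := hOsub ha
  show 𝒮.rng (T.act t a) = 𝒮.src (T.act t a)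
  rw [T.rng_act, T.src_act, ha']

end DiscreteTwist

namespace DiscreteTwist

open EtaleGroupoid

variable {R : Type*} [CommRing R] {G S : Type*} [TopologicalSpace G] [TopologicalSpace S]
  {𝒢 : AmpleGroupoid G} {𝒮 : EtaleGroupoid S} (T : DiscreteTwist R 𝒢 𝒮)

def IsActInvariant (X : Set S) : Prop := ∀ (t : Rˣ) (σ : S), σ ∈ X → T.act t σ ∈ X

def IsContravariant (f : S → R) : Prop := ∀ (t : Rˣ) (σ : S), f (T.act t σ) = ((t⁻¹ : Rˣ) : R) * f σ

variable {T}

theorem IsActInvariant.compl {X : Set S} (hX : T.IsActInvariant X) : T.IsActInvariant Xᶜ :=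
  fun t σ hσ hact => hσ (T.act_inv_act t σ ▸ hX t⁻¹ _ hact)

theorem IsActInvariant.inter {X Y : Set S} (hX : T.IsActInvariant X) (hY : T.IsActInvariant Y) :
    T.IsActInvariant (X ∩ Y) :=
  fun t σ hσ => ⟨hX t σ hσ.1, hY t σ hσ.2⟩

theorem IsActInvariant.q_mem_image_iff {X : Set S} (hX : T.IsActInvariant X) {σ : S} :
    T.q σ ∈ T.q '' X ↔ σ ∈ X := by
  refine ⟨fun ⟨τ, hτ, hq⟩ => ?_, fun hσ => ⟨σ, hσ, rfl⟩⟩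
  obtain ⟨t, rfl⟩ := T.exists_act_eq_of_q_eq hq.symm
  exact hX t τ hτ

theorem IsActInvariant.image_compl {X : Set S} (hX : T.IsActInvariant X) :
    T.q '' Xᶜ = (T.q '' X)ᶜ := by
  ext α
  obtain ⟨σ, rfl⟩ := T.q_surj α
  rw [hX.compl.q_mem_image_iff, mem_compl_iff, mem_compl_iff, hX.q_mem_image_iff]

/-- Over a local section `P` of `q`, an invariant set is read off as `P⁻¹' X`. -/
theorem IsActInvariant.isOpen_image {X : Set S} (hX : T.IsActInvariant X) (hXo : IsOpen X) :
    IsOpen (T.q '' X) := by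
  refine isOpen_iff_forall_mem_open.mpr ?_
  rintro _ ⟨σ, hσ, rfl⟩
  obtain ⟨B, hBo, hBm, -, P, hPc, hPq, -⟩ := T.loc_triv (T.q σ)
  have hmem : ∀ β ∈ B, β ∈ T.q '' X ↔ P β ∈ X := fun β hβ => by
    rw [← hX.q_mem_image_iff, hPq β hβ]
  refine ⟨B ∩ P ⁻¹' X, fun β hβ => (hmem β hβ.1).mpr hβ.2,
    hPc.isOpen_inter_preimage hBo hXo, hBm, (hmem _ hBm).mp ⟨σ, hσ, rfl⟩⟩

theorem IsActInvariant.isClosed_image {X : Set S} (hX : T.IsActInvariant X) (hXc : IsClosed X) :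
    IsClosed (T.q '' X) := by
  rw [← isOpen_compl_iff, ← hX.image_compl]
  exact hX.compl.isOpen_image hXc.isOpen_compl

theorem isActInvariant_interior_iso : T.IsActInvariant (interior 𝒮.iso) :=
  fun t _ hσ => T.act_mem_interior_iso t hσ

theorem IsContravariant.isActInvariant_support {f : S → R} (hf : T.IsContravariant f) :
    T.IsActInvariant (support f) := fun t σ hσ h0 =>
  hσ ((Units.mul_right_eq_zero t⁻¹).mp (hf t σ ▸ h0))

theorem IsContravariant.isClopen_image_support {f : S → R} (hf : T.IsContravariant f)
    (hlc : IsLocallyConstant f) : IsClopen (T.q '' support f) := by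
  have hsupp : IsClopen (support f) := by
    simpa only [support, compl_ofPred] using (hlc.isClopen_fiber 0).compl
  exact ⟨hf.isActInvariant_support.isClosed_image hsupp.isClosed,
    hf.isActInvariant_support.isOpen_image hsupp.isOpen⟩

theorem IsContravariant.isClosed_image_support_diff_interior_iso {f : S → R}
    (hf : T.IsContravariant f) (hlc : IsLocallyConstant f) :
    IsClosed (T.q '' (support f \ interior 𝒮.iso)) := by
  refine (hf.isActInvariant_support.inter isActInvariant_interior_iso.compl).isClosed_image ?_
  have hsupp : IsClosed (support f) := by
    simpa only [support, compl_ofPred] using (hlc.isClopen_fiber 0).compl.isClosed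
  exact hsupp.inter isOpen_interior.isClosed_compl

theorem IsContravariant.sub {f g : S → R} (hf : T.IsContravariant f) (hg : T.IsContravariant g) :
    T.IsContravariant (f - g) := fun t σ => by
  simp only [Pi.sub_apply, hf t σ, hg t σ, mul_sub]

theorem IsContravariant.indicator {f : S → R} (hf : T.IsContravariant f) (C : Set G) :
    T.IsContravariant ((T.q ⁻¹' C).indicator f) := fun t σ => by
  by_cases h : σ ∈ T.q ⁻¹' C
  · have h' : T.act t σ ∈ T.q ⁻¹' C := by rwa [mem_preimage, T.q_act]
    rw [indicator_of_mem h', indicator_of_mem h, hf t σ]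
  · have h' : T.act t σ ∉ T.q ⁻¹' C := by rwa [mem_preimage, T.q_act]
    rw [indicator_of_notMem h', indicator_of_notMem h, mul_zero]

theorem memA_of_image_support_subset {f : S → R} (hlc : IsLocallyConstant f)
    (hf : T.IsContravariant f) {K : Set G} (hK : IsCompact K) (hsub : T.q '' support f ⊆ K) :
    T.MemA f :=
  ⟨hlc, hf, hK.of_isClosed_subset (hf.isClopen_image_support hlc).isClosed hsub⟩

theorem MemA.isContravariant {f : S → R} (hf : T.MemA f) : T.IsContravariant f := hf.2.1

theorem memA_zero : T.MemA (0 : S → R) :=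
  memA_of_image_support_subset (IsLocallyConstant.const 0) (fun t σ => by simp) isCompact_empty
    (by simp)

theorem MemA.sub {f g : S → R} (hf : T.MemA f) (hg : T.MemA g) : T.MemA (f - g) :=
  memA_of_image_support_subset (hf.1.sub hg.1) (hf.isContravariant.sub hg.isContravariant)
    (hf.2.2.union hg.2.2) (by rw [← image_union]; exact image_mono (support_sub f g))

theorem MemA.indicator {f : S → R} (hf : T.MemA f) {C : Set G} (hC : IsClopen C) :
    T.MemA ((T.q ⁻¹' C).indicator f) :=
  memA_of_image_support_subset
    (LocallyConstant.indicator ⟨f, hf.1⟩ (hC.preimage T.continuous_q)).isLocallyConstant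
    (hf.isContravariant.indicator C) hf.2.2
    (by rw [support_indicator]; exact image_mono inter_subset_right)

end DiscreteTwist

namespace DiscreteTwist

open EtaleGroupoid

variable {R : Type*} [CommRing R] {G S : Type*} [TopologicalSpace G] [TopologicalSpace S]
  {𝒢 : AmpleGroupoid G} {𝒮 : EtaleGroupoid S} (T : DiscreteTwist R 𝒢 𝒮)

noncomputable def leftTranslate (B : Set G) (L : G → S) (g : S → R) : S → R := fun σ =>
  if h : ∃ β ∈ B, 𝒢.rng β = 𝒢.rng (T.q σ) then
    g (𝒮.mul (𝒮.inv (L (choose h))) σ) else 0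

variable {T} {B : Set G} {L : G → S}

theorem tilde_apply_act (hLq : ∀ β ∈ B, T.q (L β) = β) {β : G} (hβ : β ∈ B) (t : Rˣ) :
    T.tilde (L '' B) (T.act t (L β)) = ((t⁻¹ : Rˣ) : R) := by
  have hex : ∃ s : Rˣ, T.act t (L β) ∈ T.act s '' (L '' B) := ⟨t, L β, mem_image_of_mem L hβ, rfl⟩
  obtain ⟨_, ⟨β', hβ', rfl⟩, he⟩ := choose_spec hex
  have hββ' : β' = β := by simpa [T.q_act, hLq β hβ, hLq β' hβ'] using congrArg T.q he
  subst hββ'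
  simp only [tilde, dif_pos hex, T.act_eq_act_iff.mp he]

theorem tilde_eq_zero (hLq : ∀ β ∈ B, T.q (L β) = β) {τ : S} (hτ : T.q τ ∉ B) :
    T.tilde (L '' B) τ = 0 := by
  refine dif_neg ?_
  rintro ⟨t, _, ⟨β, hβ, rfl⟩, rfl⟩
  exact hτ (by rwa [T.q_act, hLq β hβ])

theorem isContravariant_tilde (hLq : ∀ β ∈ B, T.q (L β) = β) :
    T.IsContravariant (T.tilde (L '' B)) := by
  intro t σ
  by_cases hσ : T.q σ ∈ B
  · obtain ⟨s, hs⟩ := T.exists_act_eq_of_q_eq (hLq _ hσ).symm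
    rw [hs, act_act, tilde_apply_act hLq hσ, tilde_apply_act hLq hσ, mul_inv_rev, Units.val_mul,
      mul_comm]
  · rw [tilde_eq_zero hLq hσ, tilde_eq_zero hLq (by rwa [T.q_act]), mul_zero]

/-- Near each point, a continuous section `L` differs from the section `P` of `loc_triv` by a
fixed unit, so its image is open. -/
theorem isOpen_image_of_section (hBo : IsOpen B) (hLq : ∀ β ∈ B, T.q (L β) = β)
    (hLc : ContinuousOn L B) : IsOpen (L '' B) := by
  refine isOpen_iff_forall_mem_open.mpr ?_
  rintro _ ⟨β₀, hβ₀, rfl⟩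
  obtain ⟨B₂, hB₂o, hB₂m, -, P, -, hPq, -, -, hopenIm⟩ := T.loc_triv β₀
  obtain ⟨r, hr⟩ := T.exists_act_eq_of_q_eq ((hLq β₀ hβ₀).trans (hPq β₀ hB₂m).symm)
  set Φ : G → S := fun β => 𝒮.mul (T.i (𝒢.rng β) r) (P β) with hΦdef
  have hΦ : ∀ β ∈ B₂, Φ β = T.act r (P β) := fun β hβ => by rw [hΦdef, act, hPq β hβ]
  have hqΦ : ∀ β ∈ B₂, T.q (Φ β) = β := fun β hβ => by rw [hΦ β hβ, T.q_act, hPq β hβ]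
  set V := B ∩ L ⁻¹' (Φ '' B₂) ∩ B₂
  have hVo : IsOpen V :=
    (hLc.isOpen_inter_preimage hBo (hopenIm r B₂ subset_rfl hB₂o)).inter hB₂o
  have hLΦ : ∀ β ∈ V, L β = Φ β := by
    rintro β ⟨⟨hβ, β', hβ', he⟩, -⟩
    have hβ'β : β' = β := by rw [← hqΦ β' hβ', he, hLq β hβ]
    rw [← he, hβ'β]
  have hΦβ₀ : Φ β₀ = L β₀ := by rw [hΦ β₀ hB₂m, hr]
  refine ⟨Φ '' V, ?_, hopenIm r V inter_subset_right hVo, β₀, ⟨⟨hβ₀, β₀, hB₂m, hΦβ₀⟩, hB₂m⟩,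
    hΦβ₀⟩
  rintro _ ⟨β, hβ, rfl⟩
  exact ⟨β, hβ.1.1, hLΦ β hβ⟩

theorem isLocallyConstant_tilde [T2Space G] (hBc : IsCompact B) (hBo : IsOpen B)
    (hLq : ∀ β ∈ B, T.q (L β) = β) (hLc : ContinuousOn L B) :
    IsLocallyConstant (T.tilde (L '' B)) := by
  rw [IsLocallyConstant.iff_exists_open]
  intro τ
  by_cases hτ : T.q τ ∈ B
  · obtain ⟨t, ht⟩ := T.exists_act_eq_of_q_eq (hLq _ hτ).symm
    refine ⟨T.act t '' (L '' B), T.isOpenMap_act t _ (isOpen_image_of_section hBo hLq hLc),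
      ⟨_, mem_image_of_mem L hτ, ht.symm⟩, ?_⟩
    rintro _ ⟨_, ⟨β, hβ, rfl⟩, rfl⟩
    rw [ht, tilde_apply_act hLq hβ, tilde_apply_act hLq hτ]
  · exact ⟨T.q ⁻¹' Bᶜ, hBc.isClosed.isOpen_compl.preimage T.continuous_q, hτ,
      fun τ' hτ' => by rw [tilde_eq_zero hLq hτ', tilde_eq_zero hLq hτ]⟩

theorem memA_tilde [T2Space G] (hBc : IsCompact B) (hBo : IsOpen B)
    (hLq : ∀ β ∈ B, T.q (L β) = β) (hLc : ContinuousOn L B) : T.MemA (T.tilde (L '' B)) :=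
  memA_of_image_support_subset (isLocallyConstant_tilde hBc hBo hLq hLc)
    (isContravariant_tilde hLq) hBc
    (image_subset_iff.mpr fun _ hτ => by_contra fun h => hτ (tilde_eq_zero hLq h))

theorem leftTranslate_apply (hBinj : InjOn 𝒢.rng B) {β : G} {σ : S} (hβ : β ∈ B)
    (hr : 𝒢.rng β = 𝒢.rng (T.q σ)) (g : S → R) :
    T.leftTranslate B L g σ = g (𝒮.mul (𝒮.inv (L β)) σ) := by
  have hex : ∃ b ∈ B, 𝒢.rng b = 𝒢.rng (T.q σ) := ⟨β, hβ, hr⟩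
  obtain ⟨hb, hrb⟩ := choose_spec hex
  simp only [leftTranslate, dif_pos hex, hBinj hb hβ (hrb.trans hr.symm)]

theorem leftTranslate_eq_zero {σ : S} (h : 𝒢.rng (T.q σ) ∉ 𝒢.rng '' B) (g : S → R) :
    T.leftTranslate B L g σ = 0 :=
  dif_neg fun ⟨b, hb, hrb⟩ => h ⟨b, hb, hrb⟩

theorem src_inv_section (hLq : ∀ β ∈ B, T.q (L β) = β) {β : G} {σ : S} (hβ : β ∈ B)
    (hr : 𝒢.rng β = 𝒢.rng (T.q σ)) : 𝒮.src (𝒮.inv (L β)) = 𝒮.rng σ := by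
  rw [𝒮.src_inv, T.rng_eq_i_one (L β), hLq β hβ, hr, ← T.rng_eq_i_one σ]

theorem conv_tilde_left (hBinj : InjOn 𝒢.rng B) (hLq : ∀ β ∈ B, T.q (L β) = β)
    {g : S → R} (hg : T.IsContravariant g) :
    T.conv (T.tilde (L '' B)) g = T.leftTranslate B L g := by
  funext σ
  have hsec : ∀ α, α ∉ B → T.tilde (L '' B) (T.sec α) = 0 := fun α hα =>
    tilde_eq_zero hLq (by rwa [T.q_sec])
  simp only [conv]
  by_cases hex : ∃ β ∈ B, 𝒢.rng β = 𝒢.rng (T.q σ)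
  · obtain ⟨β, hβ, hr⟩ := hex
    rw [leftTranslate_apply hBinj hβ hr, finsum_eq_single _ β fun α hα => ?_, if_pos hr]
    · obtain ⟨s, hs⟩ := T.exists_act_eq_of_q_eq ((T.q_sec β).trans (hLq β hβ).symm)
      rw [hs, tilde_apply_act hLq hβ, T.inv_act, ← T.act_mul _ (src_inv_section hLq hβ hr),
        hg, ← mul_assoc, ← Units.val_mul, mul_inv_cancel, Units.val_one, one_mul]
    · split_ifs with hrα
      · rw [hsec α fun hαB => hα (hBinj hαB hβ (hrα.trans hr.symm)), zero_mul]
      · rfl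
  · rw [leftTranslate_eq_zero (fun ⟨b, hb, hrb⟩ => hex ⟨b, hb, hrb⟩)]
    refine finsum_eq_zero_of_forall_eq_zero fun α => ?_
    split_ifs with hrα
    · rw [hsec α fun hαB => hex ⟨α, hαB, hrα⟩, zero_mul]
    · rfl

theorem isContravariant_leftTranslate (hBinj : InjOn 𝒢.rng B) (hLq : ∀ β ∈ B, T.q (L β) = β)
    {g : S → R} (hg : T.IsContravariant g) : T.IsContravariant (T.leftTranslate B L g) := by
  intro t σ
  by_cases hex : ∃ β ∈ B, 𝒢.rng β = 𝒢.rng (T.q σ)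
  · obtain ⟨β, hβ, hr⟩ := hex
    rw [leftTranslate_apply hBinj hβ (by rwa [T.q_act]), leftTranslate_apply hBinj hβ hr,
      T.mul_act t (src_inv_section hLq hβ hr), hg]
  · have h : 𝒢.rng (T.q σ) ∉ 𝒢.rng '' B := fun ⟨b, hb, hrb⟩ => hex ⟨b, hb, hrb⟩
    rw [leftTranslate_eq_zero h, leftTranslate_eq_zero (by rwa [T.q_act]), mul_zero]

/-- On the open set of `σ` with `r (q σ) ∈ r(B)`, the translate is `g ∘ ψ` for a continuous
`ψ` built from a continuous inverse of `r` on `B`. -/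
theorem isLocallyConstant_leftTranslate [T2Space G] (hBc : IsCompact B) (hBo : IsOpen B)
    (hBinj : InjOn 𝒢.rng B) (hLq : ∀ β ∈ B, T.q (L β) = β) (hLc : ContinuousOn L B)
    {g : S → R} (hg : IsLocallyConstant g) : IsLocallyConstant (T.leftTranslate B L g) := by
  have hrq : Continuous fun σ => 𝒢.rng (T.q σ) := 𝒢.continuous_rng.comp T.continuous_q
  rw [IsLocallyConstant.iff_exists_open]
  intro σ
  by_cases hmem : 𝒢.rng (T.q σ) ∈ 𝒢.rng '' B
  · have : Nonempty G := ⟨hmem.choose⟩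
    set ρ := invFunOn 𝒢.rng B
    set U := (fun σ' => 𝒢.rng (T.q σ')) ⁻¹' (𝒢.rng '' B)
    have hρ : ∀ σ' ∈ U, ρ (𝒢.rng (T.q σ')) ∈ B ∧ 𝒢.rng (ρ (𝒢.rng (T.q σ'))) = 𝒢.rng (T.q σ') :=
      fun _ h => ⟨invFunOn_mem h, invFunOn_eq h⟩
    set ψ : S → S := fun σ' => 𝒮.mul (𝒮.inv (L (ρ (𝒢.rng (T.q σ'))))) σ'
    have hψ : ContinuousOn ψ U := by
      have hρc : ContinuousOn (fun σ' => ρ (𝒢.rng (T.q σ'))) U :=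
        (continuousOn_invFunOn_rng hBo hBinj).comp hrq.continuousOn fun _ h => h
      refine 𝒮.continuousOn_mul.comp ((𝒮.continuous_inv.comp_continuousOn
        (hLc.comp hρc fun σ' h => (hρ σ' h).1)).prodMk continuousOn_id) fun σ' h => ?_
      exact src_inv_section hLq (hρ σ' h).1 (hρ σ' h).2
    have hUo : IsOpen U := (𝒢.isOpenMap_rng B hBo).preimage hrq
    have hval : ∀ σ' ∈ U, T.leftTranslate B L g σ' = g (ψ σ') := fun σ' h =>
      leftTranslate_apply hBinj (hρ σ' h).1 (hρ σ' h).2 g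
    refine ⟨U ∩ ψ ⁻¹' (g ⁻¹' {g (ψ σ)}), hψ.isOpen_inter_preimage hUo (hg _), ⟨hmem, rfl⟩, ?_⟩
    rintro σ' ⟨hσ'U, hσ'v⟩
    rw [hval σ' hσ'U, hval σ hmem]
    exact hσ'v
  · refine ⟨(fun σ' => 𝒢.rng (T.q σ')) ⁻¹' (𝒢.rng '' B)ᶜ,
      (hBc.image 𝒢.continuous_rng).isClosed.isOpen_compl.preimage hrq, hmem, fun σ' hσ' => ?_⟩
    rw [leftTranslate_eq_zero hσ', leftTranslate_eq_zero hmem]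

theorem memA_leftTranslate [T2Space G] (hBc : IsCompact B) (hBo : IsOpen B)
    (hBinj : InjOn 𝒢.rng B) (hLq : ∀ β ∈ B, T.q (L β) = β) (hLc : ContinuousOn L B)
    {g : S → R} (hg : T.MemA g) : T.MemA (T.leftTranslate B L g) := by
  refine memA_of_image_support_subset
    (isLocallyConstant_leftTranslate hBc hBo hBinj hLq hLc hg.1)
    (isContravariant_leftTranslate hBinj hLq hg.isContravariant)
    (isCompact_setMul (𝒢 := 𝒢.toEtaleGroupoid) hBc hg.2.2) ?_
  rintro _ ⟨σ, hσ, rfl⟩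
  by_cases hex : ∃ β ∈ B, 𝒢.rng β = 𝒢.rng (T.q σ)
  · obtain ⟨β, hβ, hr⟩ := hex
    rw [mem_support, leftTranslate_apply hBinj hβ hr] at hσ
    have hc : 𝒢.src (𝒢.inv β) = 𝒢.rng (T.q σ) := by rw [𝒢.src_inv, hr]
    have hq : T.q (𝒮.mul (𝒮.inv (L β)) σ) = 𝒢.mul (𝒢.inv β) (T.q σ) := by
      rw [T.q_mul _ _ (src_inv_section hLq hβ hr), T.q_inv, hLq β hβ]
    refine ⟨β, hβ, _, ⟨_, hσ, rfl⟩, by rw [hq, 𝒢.rng_mul _ _ hc, 𝒢.rng_inv], ?_⟩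
    rw [hq, ← 𝒢.mul_assoc' _ _ _ (𝒢.rng_inv β).symm hc, 𝒢.mul_inv_self, hr, 𝒢.rng_mul_self]
  · exact absurd (leftTranslate_eq_zero (fun ⟨b, hb, hrb⟩ => hex ⟨b, hb, hrb⟩) g) hσ

end DiscreteTwist

namespace DiscreteTwist

open EtaleGroupoid

variable {R : Type*} [CommRing R] {G S : Type*} [TopologicalSpace G] [TopologicalSpace S]
  {𝒢 : AmpleGroupoid G} {𝒮 : EtaleGroupoid S} {T : DiscreteTwist R 𝒢 𝒮} {K : Set G}

theorem q_i_one_of_subset_unitSpace (hKu : K ⊆ 𝒢.unitSpace) : ∀ x ∈ K, T.q (T.i x 1) = x :=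
  fun _ hx => T.q_i (hKu hx) 1

theorem memA_tilde_units [T2Space G] (hKc : IsCompact K) (hKo : IsOpen K)
    (hKu : K ⊆ 𝒢.unitSpace) : T.MemA (T.tilde ((fun x => T.i x 1) '' K)) :=
  memA_tilde hKc hKo (q_i_one_of_subset_unitSpace hKu) ((T.continuousOn_i 1).mono hKu)

theorem conv_tilde_units_left (hKu : K ⊆ 𝒢.unitSpace) {g : S → R} (hg : T.IsContravariant g) :
    T.conv (T.tilde ((fun x => T.i x 1) '' K)) g = (T.q ⁻¹' (𝒢.rng ⁻¹' K)).indicator g := by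
  have hinj := injOn_rng_of_subset_unitSpace hKu
  rw [conv_tilde_left hinj (q_i_one_of_subset_unitSpace hKu) hg]
  funext σ
  by_cases h : 𝒢.rng (T.q σ) ∈ K
  · rw [indicator_of_mem (show σ ∈ T.q ⁻¹' (𝒢.rng ⁻¹' K) from h),
      leftTranslate_apply hinj h (rng_of_mem_unitSpace (hKu h)),
      inv_of_mem_unitSpace (T.i_one_mem_unitSpace (hKu h)), ← T.rng_eq_i_one, 𝒮.rng_mul_self]
  · rw [indicator_of_notMem (show σ ∉ T.q ⁻¹' (𝒢.rng ⁻¹' K) from h), leftTranslate_eq_zero]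
    rintro ⟨b, hb, hrb⟩
    exact h (by rwa [← hrb, rng_of_mem_unitSpace (hKu hb)])

theorem eq_q_and_src_mem_of_tilde_units_ne_zero (hKu : K ⊆ 𝒢.unitSpace) {α : G} {σ : S}
    (hr : 𝒢.rng α = 𝒢.rng (T.q σ))
    (h0 : T.tilde ((fun x => T.i x 1) '' K) (𝒮.mul (𝒮.inv (T.sec α)) σ) ≠ 0) :
    α = T.q σ ∧ 𝒢.src (T.q σ) ∈ K := by
  have hc : 𝒮.src (𝒮.inv (T.sec α)) = 𝒮.rng σ := by
    rw [𝒮.src_inv, T.rng_eq_i_one (T.sec α), T.q_sec, hr, ← T.rng_eq_i_one]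
  have hx : 𝒢.mul (𝒢.inv α) (T.q σ) ∈ K := by
    by_contra hx
    exact h0 (tilde_eq_zero (q_i_one_of_subset_unitSpace hKu)
      (by rwa [T.q_mul _ _ hc, T.q_inv, T.q_sec]))
  have hα := eq_of_inv_mul_mem_unitSpace hr (hKu hx)
  refine ⟨hα, ?_⟩
  rwa [hα, 𝒢.inv_mul_self] at hx

theorem conv_tilde_units_right (hKu : K ⊆ 𝒢.unitSpace) {g : S → R} (hg : T.IsContravariant g) :
    T.conv g (T.tilde ((fun x => T.i x 1) '' K)) = (T.q ⁻¹' (𝒢.src ⁻¹' K)).indicator g := by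
  funext σ
  simp only [conv]
  by_cases hK : 𝒢.src (T.q σ) ∈ K
  · rw [indicator_of_mem (show σ ∈ T.q ⁻¹' (𝒢.src ⁻¹' K) from hK),
      finsum_eq_single _ (T.q σ) fun α hα => ?_, if_pos rfl]
    · obtain ⟨t, ht⟩ := T.exists_act_eq_of_q_eq (T.q_sec (T.q σ))
      have hunit : 𝒮.mul (𝒮.inv (T.act t σ)) σ = T.act t⁻¹ (T.i (𝒢.src (T.q σ)) 1) := by
        rw [T.inv_act, ← T.act_mul _ (𝒮.src_inv σ), 𝒮.inv_mul_self, T.src_eq_i_one]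
      rw [ht, hunit, tilde_apply_act (q_i_one_of_subset_unitSpace hKu) hK, hg, _root_.inv_inv, mul_right_comm,
        ← Units.val_mul, inv_mul_cancel, Units.val_one, one_mul]
    · split_ifs with hr
      · by_contra h0
        exact hα (eq_q_and_src_mem_of_tilde_units_ne_zero hKu hr (right_ne_zero_of_mul h0)).1
      · rfl
  · rw [indicator_of_notMem (show σ ∉ T.q ⁻¹' (𝒢.src ⁻¹' K) from hK)]
    refine finsum_eq_zero_of_forall_eq_zero fun α => ?_
    split_ifs with hr
    · by_contra h0
      exact hK (eq_q_and_src_mem_of_tilde_units_ne_zero hKu hr (right_ne_zero_of_mul h0)).2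
    · rfl

end DiscreteTwist

theorem IsLocallyConstant.exists_mem_apply_ne_of_mem_closure {X Y : Type*} [TopologicalSpace X]
    {f : X → Y} (hf : IsLocallyConstant f) {A : Set X} {x : X} (hx : x ∈ closure A) {y : Y}
    (hfx : f x ≠ y) : ∃ a ∈ A, f a ≠ y := by
  obtain ⟨a, ha, haA⟩ := mem_closure_iff.mp hx (f ⁻¹' {f x}) (hf _) rfl
  exact ⟨a, haA, fun h => hfx (ha.symm.trans h)⟩

namespace DiscreteTwist

open EtaleGroupoid

variable {R : Type*} [CommRing R] {G S : Type*} [TopologicalSpace G] [TopologicalSpace S]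
  {𝒢 : AmpleGroupoid G} {𝒮 : EtaleGroupoid S} {T : DiscreteTwist R 𝒢 𝒮}

variable (T) in
theorem exists_compactOpen_section (β : G) :
    ∃ B : Set G, ∃ L : G → S, β ∈ B ∧ IsCompact B ∧ IsOpen B ∧ InjOn 𝒢.rng B ∧
      ContinuousOn L B ∧ ∀ β' ∈ B, T.q (L β') = β' := by
  obtain ⟨B, hBo, hBm, -, P, hPc, hPq, -⟩ := T.loc_triv β
  obtain ⟨B', ⟨hB'c, hB'o, -, hB'inj⟩, hβB', hB'B⟩ := 𝒢.ample.exists_subset_of_mem_open hBm hBo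
  exact ⟨B', P, hβB', hB'c, hB'o, hB'inj, hPc.mono hB'B, fun β' h => hPq β' (hB'B h)⟩

/-- `θ` is `1̃` of a compact open bisection through `(q σ₀)⁻¹`, where `h σ₀ ≠ 0`. -/
theorem exists_conv_apply_unit_ne_zero [T2Space G] {h : S → R} (hh : T.MemA h) (hne : h ≠ 0) :
    ∃ θ : S → R, T.MemA θ ∧ T.MemA (T.conv θ h) ∧ ∃ u ∈ 𝒮.unitSpace, T.conv θ h u ≠ 0 := by
  obtain ⟨σ₀, hσ₀⟩ := Function.ne_iff.mp hne
  obtain ⟨B, L, hβ, hBc, hBo, hBinj, hLc, hLq⟩ := T.exists_compactOpen_section (𝒢.inv (T.q σ₀))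
  have hx₀ : 𝒢.src (T.q σ₀) ∈ 𝒢.unitSpace := src_mem_unitSpace _ _
  have hconv := conv_tilde_left hBinj hLq hh.isContravariant
  refine ⟨_, memA_tilde hBc hBo hLq hLc, hconv ▸ memA_leftTranslate hBc hBo hBinj hLq hLc hh,
    T.i (𝒢.src (T.q σ₀)) 1, T.i_one_mem_unitSpace hx₀, ?_⟩
  set τ := 𝒮.inv (L (𝒢.inv (T.q σ₀)))
  have hτ : T.q τ = T.q σ₀ := by rw [T.q_inv, hLq _ hβ, 𝒢.inv_inv]
  have hsτ : 𝒮.src τ = T.i (𝒢.src (T.q σ₀)) 1 := by rw [T.src_eq_i_one, hτ]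
  rw [hconv, leftTranslate_apply hBinj hβ (by rw [𝒢.rng_inv, T.q_i hx₀, rng_of_mem_unitSpace hx₀]),
    ← hsτ, 𝒮.mul_src_self, ← mem_support,
    ← hh.isContravariant.isActInvariant_support.q_mem_image_iff, hτ]
  exact ⟨σ₀, hσ₀, rfl⟩

/-- `(s, r)` maps the compact set `q '' (support f \ Iso(Σ)°)` to a closed set missing
`(q u, q u)`; `K × K` is taken inside its complement. -/
theorem exists_compactOpen_isolating_isotropy [T2Space G] {f : S → R} (hf : T.MemA f) {u : S}
    (hu : u ∈ 𝒮.unitSpace) (huIso : 𝒮.isoAt u ⊆ interior 𝒮.iso) :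
    ∃ K : Set G, IsCompact K ∧ IsOpen K ∧ K ⊆ 𝒢.unitSpace ∧ T.q u ∈ K ∧
      ∀ γ ∈ support f, 𝒢.rng (T.q γ) ∈ K → 𝒢.src (T.q γ) ∈ K → γ ∈ interior 𝒮.iso := by
  set E := T.q '' (support f \ interior 𝒮.iso)
  have hEc : IsCompact E := hf.2.2.of_isClosed_subset
    (hf.isContravariant.isClosed_image_support_diff_interior_iso hf.1)
    (image_mono sdiff_subset)
  set M := (fun α => (𝒢.src α, 𝒢.rng α)) '' E
  have hMc : IsClosed M :=
    (hEc.image (𝒢.continuous_src.prodMk 𝒢.continuous_rng)).isClosed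
  have hxM : (T.q u, T.q u) ∉ M := by
    rintro ⟨_, ⟨γ, ⟨-, hγ⟩, rfl⟩, hsr⟩
    simp only [Prod.mk.injEq] at hsr
    refine hγ (huIso ⟨?_, ?_⟩)
    · rw [T.rng_eq_i_one, hsr.2, ← T.eq_i_one_of_mem_unitSpace hu]
    · rw [T.src_eq_i_one, hsr.1, ← T.eq_i_one_of_mem_unitSpace hu]
  obtain ⟨U₁, U₂, hU₁, hxU₁, hU₂, hxU₂, hprod⟩ :=
    mem_nhds_prod_iff'.mp (hMc.isOpen_compl.mem_nhds hxM)
  obtain ⟨K, ⟨hKc, hKo, -⟩, hxK, hKsub⟩ := 𝒢.ample.exists_subset_of_mem_open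
    (show T.q u ∈ U₁ ∩ U₂ ∩ 𝒢.unitSpace from ⟨⟨hxU₁, hxU₂⟩, T.q_unit_bij.mapsTo hu⟩)
    ((hU₁.inter hU₂).inter 𝒢.isOpen_unitSpace)
  refine ⟨K, hKc, hKo, fun x hx => (hKsub hx).2, hxK, fun γ hγ hr hs => ?_⟩
  by_contra hγi
  exact hprod ⟨(hKsub hs).1.1, (hKsub hr).1.2⟩ ⟨T.q γ, ⟨γ, ⟨hγ, hγi⟩, rfl⟩, rfl⟩

theorem conv_tilde_units_conv_tilde_units {K : Set G} (hKu : K ⊆ 𝒢.unitSpace) {f : S → R}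
    (hf : T.IsContravariant f) :
    T.conv (T.tilde ((fun x => T.i x 1) '' K)) (T.conv f (T.tilde ((fun x => T.i x 1) '' K))) =
      (T.q ⁻¹' (𝒢.rng ⁻¹' K ∩ 𝒢.src ⁻¹' K)).indicator f := by
  rw [conv_tilde_units_right hKu hf, conv_tilde_units_left hKu (hf.indicator _),
    indicator_indicator, preimage_inter]

end DiscreteTwist

open EtaleGroupoid DiscreteTwist in
theorem stmt_7_general {R : Type*} [CommRing R] {G S : Type*}
    [TopologicalSpace G] [TopologicalSpace S] [T2Space G]
    {𝒢 : AmpleGroupoid G} {𝒮 : EtaleGroupoid S} (T : DiscreteTwist R 𝒢 𝒮)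
    (hdense : 𝒮.unitSpace ⊆
      closure {u ∈ 𝒮.unitSpace | 𝒮.isoAt u ⊆ interior 𝒮.iso})
    {Q : Type*} [Ring Q] (π : (S → R) → Q)
    (hzero : π 0 = 0)
    (hadd : ∀ f g, T.MemA f → T.MemA g → π (f + g) = π f + π g)
    (hmul : ∀ f g, T.MemA f → T.MemA g → π (T.conv f g) = π f * π g) :
    Set.InjOn π {f | T.MemA f} ↔
      ∀ f : S → R, T.MemA f → Function.support f ⊆ interior 𝒮.iso →
        f ≠ 0 → π f ≠ 0 := by
  refine ⟨fun hinj f hf _ hne h0 => hne (hinj hf memA_zero (h0.trans hzero.symm)), ?_⟩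
  intro hcond f hf g hg hfg
  by_contra hne
  have hπ : π (f - g) = 0 := by
    simpa [hfg] using hadd (f - g) g (hf.sub hg) hg
  obtain ⟨θ, hθ, hf₀, u₀, hu₀, hne₀⟩ :=
    exists_conv_apply_unit_ne_zero (hf.sub hg) (sub_ne_zero.mpr hne)
  set f₀ := T.conv θ (f - g)
  obtain ⟨u, ⟨hu, huIso⟩, hu0⟩ := hf₀.1.exists_mem_apply_ne_of_mem_closure (hdense hu₀) hne₀
  obtain ⟨K, hKc, hKo, hKu, huK, hKiso⟩ := exists_compactOpen_isolating_isotropy hf₀ hu huIso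
  set e := T.tilde ((fun x => T.i x 1) '' K)
  have he : T.MemA e := memA_tilde_units hKc hKo hKu
  have hKcl : IsClopen K := ⟨hKc.isClosed, hKo⟩
  have hf₀e : T.MemA (T.conv f₀ e) := by
    rw [conv_tilde_units_right hKu hf₀.isContravariant]
    exact hf₀.indicator (hKcl.preimage 𝒢.continuous_src)
  have hπcut : π ((T.q ⁻¹' (𝒢.rng ⁻¹' K ∩ 𝒢.src ⁻¹' K)).indicator f₀) = 0 := by
    rw [← conv_tilde_units_conv_tilde_units hKu hf₀.isContravariant, hmul _ _ he hf₀e,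
      hmul _ _ hf₀ he, hmul _ _ hθ (hf.sub hg), hπ, mul_zero, zero_mul, mul_zero]
  have hqu : T.q u ∈ 𝒢.unitSpace := T.q_unit_bij.mapsTo hu
  refine hcond _ (hf₀.indicator ((hKcl.preimage 𝒢.continuous_rng).inter
    (hKcl.preimage 𝒢.continuous_src))) (fun γ hγ => ?_) (Function.ne_iff.mpr ⟨u, ?_⟩) hπcut
  · rw [support_indicator] at hγ
    exact hKiso γ hγ.2 hγ.1.1 hγ.1.2
  · have hu' : u ∈ T.q ⁻¹' (𝒢.rng ⁻¹' K ∩ 𝒢.src ⁻¹' K) :=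
      ⟨by rwa [mem_preimage, rng_of_mem_unitSpace hqu],
        by rwa [mem_preimage, src_of_mem_unitSpace hqu]⟩
    rwa [indicator_of_mem hu']

/-- Generalised Uniqueness Theorem: if the units `u` with
`Σᵤᵘ ⊆ Iso(Σ)°` are dense in `Σ⁽⁰⁾`, then a ring homomorphism
`π : A_R(G;Σ) → Q` is injective iff it is nonzero on every nonzero element of
`A_R(Iso(G)°; Iso(Σ)°)` (included in `A_R(G;Σ)` as the functions supported in
`Iso(Σ)°`). -/
theorem stmt_7 {R : Type*} [CommRing R] {G S : Type*}
    [TopologicalSpace G] [TopologicalSpace S] [T2Space G] [T2Space S]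
    {𝒢 : AmpleGroupoid G} {𝒮 : EtaleGroupoid S} (T : DiscreteTwist R 𝒢 𝒮)
    (hdense : 𝒮.unitSpace ⊆
      closure {u ∈ 𝒮.unitSpace | 𝒮.isoAt u ⊆ interior 𝒮.iso})
    {Q : Type*} [Ring Q] (π : (S → R) → Q)
    (hzero : π 0 = 0)
    (hadd : ∀ f g, T.MemA f → T.MemA g → π (f + g) = π f + π g)
    (hmul : ∀ f g, T.MemA f → T.MemA g → π (T.conv f g) = π f * π g) :
    Set.InjOn π {f | T.MemA f} ↔
      ∀ f : S → R, T.MemA f → Function.support f ⊆ interior 𝒮.iso →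
        f ≠ 0 → π f ≠ 0 :=
  stmt_7_general T hdense π hzero hadd hmul
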